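/- Let F be a non-degenerate cdf on ℝ with finite first absolute moment, c > 0 and δ < 0, and suppose F solves problem P_{c,δ}. Then: (a) the open interval (α_F, α_F + |δ|) contains no point of supp(F); (b) α_F is an atom of F, i.e. F({α_F}) > 0; and (c) (α_F, ∞) ∩ supp(F) ≠ ∅. -/

import Mathlib

open MeasureTheory Set

/-- Survival function `G(x) = 1 - F(x) = μ(x, ∞)` of the distribution `μ`. -/
noncomputable def survG (μ : Measure ℝ) (x : ℝ) : ℝ := (μ (Set.Ioi x)).toReal

/-- `H(x) = G(x+δ) - c ∫_x^∞ G(t) dt`. -/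
noncomputable def funH (μ : Measure ℝ) (c δ x : ℝ) : ℝ :=
  survG μ (x + δ) - c * ∫ t in Set.Ioi x, survG μ t

/-- The support of the distribution: points every neighbourhood of which has positive mass. -/
def suppF (μ : Measure ℝ) : Set ℝ :=
  {x | ∀ ε > 0, 0 < μ (Set.Ioo (x - ε) (x + ε))}

/-- The set `R` of continuity points `x` of `F` in the support such that `x + δ` is an atom. -/
def Rset (μ : Measure ℝ) (δ : ℝ) : Set ℝ :=
  {x ∈ suppF μ | μ {x} = 0 ∧ 0 < μ {x + δ}}

/-- `T = supp(F) \ R`. -/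
def Tset (μ : Measure ℝ) (δ : ℝ) : Set ℝ := suppF μ \ Rset μ δ

lemma survG_nonneg (μ : Measure ℝ) (x : ℝ) : 0 ≤ survG μ x := ENNReal.toReal_nonneg

lemma survG_antitone (μ : Measure ℝ) [IsProbabilityMeasure μ] : Antitone (survG μ) :=
  fun a b hab =>
    ENNReal.toReal_mono (measure_ne_top μ _) (measure_mono (Set.Ioi_subset_Ioi hab))

lemma survG_le_one (μ : Measure ℝ) [IsProbabilityMeasure μ] (x : ℝ) : survG μ x ≤ 1 := by
  have h : μ (Set.Ioi x) ≤ 1 := prob_le_one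
  simpa [survG] using ENNReal.toReal_mono ENNReal.one_ne_top h

lemma suppF_closed (μ : Measure ℝ) : IsClosed (suppF μ) := by
  rw [← isOpen_compl_iff, Metric.isOpen_iff]
  intro x hx
  simp only [suppF, mem_compl_iff, mem_setOf_eq] at hx
  push_neg at hx
  obtain ⟨ε, hε, h0⟩ := hx
  have h0' : μ (Set.Ioo (x - ε) (x + ε)) = 0 := le_antisymm h0 zero_le
  refine ⟨ε / 2, by positivity, ?_⟩
  intro y hy
  rw [Metric.mem_ball, Real.dist_eq, abs_lt] at hy
  simp only [suppF, mem_compl_iff, mem_setOf_eq]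
  push_neg
  refine ⟨ε / 2, by positivity, ?_⟩
  rw [le_zero_iff]
  refine measure_mono_null ?_ h0'
  intro z hz
  simp only [mem_Ioo] at hz ⊢
  constructor <;> linarith [hy.1, hy.2, hz.1, hz.2]

lemma suppF_compl_null (μ : Measure ℝ) : μ (suppF μ)ᶜ = 0 := by
  have hsub : (suppF μ)ᶜ ⊆
      ⋃ (q : ℚ × ℚ) (_ : μ (Set.Ioo (q.1 : ℝ) q.2) = 0), Set.Ioo (q.1 : ℝ) (q.2 : ℝ) := by
    intro x hx
    simp only [suppF, mem_compl_iff, mem_setOf_eq] at hx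
    push_neg at hx
    obtain ⟨ε, hε, h0⟩ := hx
    have h0' : μ (Set.Ioo (x - ε) (x + ε)) = 0 := le_antisymm h0 zero_le
    obtain ⟨q, hq1, hq2⟩ := exists_rat_btwn (show x - ε < x by linarith)
    obtain ⟨r, hr1, hr2⟩ := exists_rat_btwn (show x < x + ε by linarith)
    refine mem_iUnion.mpr ⟨(q, r), mem_iUnion.mpr ⟨?_, hq2, hr1⟩⟩
    refine measure_mono_null ?_ h0'
    intro z hz
    simp only [mem_Ioo] at hz ⊢
    constructor <;> linarith [hz.1, hz.2]
  refine measure_mono_null hsub (measure_iUnion_null fun q => measure_iUnion_null fun h => h)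

lemma survG_pos (μ : Measure ℝ) [IsProbabilityMeasure μ] {y t : ℝ}
    (hy : y ∈ suppF μ) (ht : t < y) : 0 < survG μ t := by
  have h := hy (y - t) (by linarith)
  have hsub : Set.Ioo (y - (y - t)) (y + (y - t)) ⊆ Set.Ioi t := by
    intro z hz
    simp only [mem_Ioo] at hz
    simp only [mem_Ioi]
    linarith [hz.1]
  have hpos : 0 < μ (Set.Ioi t) := lt_of_lt_of_le h (measure_mono hsub)
  exact ENNReal.toReal_pos hpos.ne' (measure_ne_top μ _)

lemma survG_integrableOn (μ : Measure ℝ) [IsProbabilityMeasure μ]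
    (hint : Integrable (fun x : ℝ => x) μ) (a : ℝ) :
    IntegrableOn (survG μ) (Set.Ioi a) := by
  have hmono : Antitone (fun s : ℝ => μ (Set.Ioi s)) :=
    fun u v huv => measure_mono (Set.Ioi_subset_Ioi huv)
  have hmeas : Measurable fun s : ℝ => μ (Set.Ioi s) := hmono.measurable
  have hfin : ∫⁻ s in Set.Ioi a, μ (Set.Ioi s) ≠ ⊤ := by
    have hf : Integrable (fun ω : ℝ => max (ω - a) 0) μ :=
      (hint.sub (integrable_const a)).pos_part
    have key := lintegral_eq_lintegral_meas_lt μ (f := fun ω : ℝ => max (ω - a) 0)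
      (Filter.Eventually.of_forall fun ω => le_max_right _ _) hf.aemeasurable
    have hlt : ∫⁻ ω, ENNReal.ofReal (max (ω - a) 0) ∂μ < ⊤ := hf.lintegral_lt_top
    rw [key] at hlt
    have h1 : ∫⁻ t in Set.Ioi (0 : ℝ), μ {ω : ℝ | t < max (ω - a) 0}
        = ∫⁻ t in Set.Ioi (0 : ℝ), μ (Set.Ioi (t + a)) := by
      refine setLIntegral_congr_fun measurableSet_Ioi
        (fun t ht => ?_)
      have ht' : (0 : ℝ) < t := ht
      congr 1
      ext ω
      simp only [mem_setOf_eq, mem_Ioi, lt_max_iff]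
      constructor
      · rintro (h | h)
        · linarith
        · linarith
      · intro h
        left
        linarith
    have h2 : ∫⁻ t in Set.Ioi (0 : ℝ), μ (Set.Ioi (t + a))
        = ∫⁻ s in Set.Ioi a, μ (Set.Ioi s) := by
      have hmp : MeasurePreserving (fun t : ℝ => t + a) volume volume :=
        measurePreserving_add_right volume a
      have hemb : MeasurableEmbedding (fun t : ℝ => t + a) :=
        (MeasurableEquiv.addRight a).measurableEmbedding
      have := hmp.setLIntegral_comp_emb hemb (fun s => μ (Set.Ioi s)) (Set.Ioi 0)
      rw [Set.image_add_const_Ioi, zero_add] at this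
      exact this
    rw [h1, h2] at hlt
    exact hlt.ne
  have := integrable_toReal_of_lintegral_ne_top
    (hmeas.aemeasurable.restrict (s := Set.Ioi a)) hfin
  exact this

/-- For `δ < 0`, if `F` solves `P_{c,δ}` then (a) `(α_F, α_F + |δ|)` contains no point of
the support, (b) `α_F` is an atom, and (c) `(α_F, ∞)` meets the support. -/
theorem stmt5 (μ : Measure ℝ) [IsProbabilityMeasure μ]
    (hnd : ∀ x : ℝ, μ {x} ≠ 1)
    (hint : Integrable (fun x : ℝ => x) μ)
    (c δ : ℝ) (hc : 0 < c) (hδ : δ < 0)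
    (hsol : ∀ x ∈ Tset μ δ, funH μ c δ x = 0) :
    Set.Ioo (sInf (suppF μ)) (sInf (suppF μ) + |δ|) ∩ suppF μ = ∅ ∧
    0 < μ {sInf (suppF μ)} ∧
    (Set.Ioi (sInf (suppF μ)) ∩ suppF μ).Nonempty := by
  have hclosed := suppF_closed μ
  have hnull := suppF_compl_null μ
  -- positive-measure sets meet the support
  have hmeet : ∀ A : Set ℝ, 0 < μ A → (A ∩ suppF μ).Nonempty := by
    intro A hA
    by_contra h
    rw [not_nonempty_iff_eq_empty] at h
    have hsub : A ⊆ (suppF μ)ᶜ := fun x hx hxS =>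
      eq_empty_iff_forall_notMem.mp h x ⟨hx, hxS⟩
    exact absurd (measure_mono_null hsub hnull) hA.ne'
  have hSne : (suppF μ).Nonempty := by
    obtain ⟨x, _, hx⟩ := hmeet univ (by simp)
    exact ⟨x, hx⟩
  obtain ⟨s, hs⟩ := hSne
  -- R is countable and null
  have hRcount : (Rset μ δ).Countable := by
    have hc' : Set.Countable {x : ℝ | 0 < μ {x}} := by
      apply Measure.countable_meas_pos_of_disjoint_iUnion (μ := μ)
        (As := fun x : ℝ => {x})
      · exact fun x => measurableSet_singleton x
      · intro i j hij
        simp [Function.onFun, Set.disjoint_singleton, hij]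
    have hsub : Rset μ δ ⊆ (fun x : ℝ => x + δ) ⁻¹' {x | 0 < μ {x}} :=
      fun x hx => hx.2.2
    exact (hc'.preimage (add_left_injective δ)).mono hsub
  have hRnull : μ (Rset μ δ) = 0 := by
    have heq : Rset μ δ = ⋃ x ∈ Rset μ δ, {x} := by
      simp
    rw [heq]
    exact (measure_biUnion_null_iff hRcount).mpr fun x hx => hx.2.1
  -- positive-measure sets meet T
  have hTmeet : ∀ A : Set ℝ, 0 < μ A → (A ∩ Tset μ δ).Nonempty := by
    intro A hA
    by_contra h
    rw [not_nonempty_iff_eq_empty] at h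
    have hsub : A ⊆ (suppF μ)ᶜ ∪ Rset μ δ := by
      intro x hx
      by_cases hxS : x ∈ suppF μ
      · right
        by_contra hxR
        exact eq_empty_iff_forall_notMem.mp h x ⟨hx, hxS, hxR⟩
      · left
        exact hxS
    exact absurd (measure_mono_null hsub (measure_union_null hnull hRnull)) hA.ne'
  -- support is bounded below
  have hBdd : BddBelow (suppF μ) := by
    by_contra hB
    have hg : 0 < survG μ (s - 1) := survG_pos μ hs (by linarith)
    set g := survG μ (s - 1) with hgdef
    set x₀ : ℝ := (s - 1) - 2 / (c * g) with hx₀def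
    obtain ⟨s', hs'S, hs'lt⟩ := not_bddBelow_iff.mp hB (x₀ - 1)
    have hpos : 0 < μ (Set.Iic x₀) := by
      refine lt_of_lt_of_le (hs'S 1 one_pos) (measure_mono ?_)
      intro z hz
      simp only [mem_Ioo] at hz
      simp only [mem_Iic]
      linarith [hz.2]
    obtain ⟨x, hxA, hxT⟩ := hTmeet (Set.Iic x₀) hpos
    have hHx := hsol x hxT
    have hxle : x ≤ x₀ := hxA
    have hcg : 0 < c * g := mul_pos hc hg
    have hint1 : IntegrableOn (survG μ) (Set.Ioi x) volume := survG_integrableOn μ hint x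
    have hxs1 : x < s - 1 := by
      have : 0 < 2 / (c * g) := by positivity
      calc x ≤ x₀ := hxle
        _ < s - 1 := by rw [hx₀def]; linarith
    have hlow : 2 / c ≤ ∫ t in Set.Ioi x, survG μ t := by
      have hsub : Set.Ioc x (s - 1) ⊆ Set.Ioi x := Set.Ioc_subset_Ioi_self
      have h1 : ∫ t in Set.Ioc x (s - 1), survG μ t ≤ ∫ t in Set.Ioi x, survG μ t :=
        setIntegral_mono_set hint1
          (Filter.Eventually.of_forall fun t => survG_nonneg μ t)
          (HasSubset.Subset.eventuallyLE hsub)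
      have h2 : g * (volume (Set.Ioc x (s - 1))).toReal
          ≤ ∫ t in Set.Ioc x (s - 1), survG μ t := by
        refine setIntegral_ge_of_const_le_real measurableSet_Ioc ?_ ?_ (hint1.mono_set hsub)
        · rw [Real.volume_Ioc]; exact ENNReal.ofReal_ne_top
        · intro t ht
          exact survG_antitone μ ht.2
      have hvol : (volume (Set.Ioc x (s - 1))).toReal = s - 1 - x := by
        rw [Real.volume_Ioc]
        exact ENNReal.toReal_ofReal (by linarith)
      rw [hvol] at h2
      have hchain : 2 / c ≤ g * (s - 1 - x) := by
        have h3 : 2 / (c * g) ≤ s - 1 - x := by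
          rw [hx₀def] at hxle; linarith
        have := mul_le_mul_of_nonneg_left h3 hg.le
        calc 2 / c = g * (2 / (c * g)) := by field_simp
          _ ≤ g * (s - 1 - x) := this
      linarith
    -- H(x) < 0, contradiction
    have hneg : funH μ c δ x < 0 := by
      unfold funH
      have h4 := survG_le_one μ (x + δ)
      have h5 : 2 ≤ c * ∫ t in Set.Ioi x, survG μ t := by
        have := mul_le_mul_of_nonneg_left hlow hc.le
        calc (2 : ℝ) = c * (2 / c) := by field_simp
          _ ≤ c * ∫ t in Set.Ioi x, survG μ t := this
      linarith
    rw [hHx] at hneg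
    exact absurd hneg (lt_irrefl 0)
  -- α = sInf of the support
  set α := sInf (suppF μ) with hαdef
  have hαS : α ∈ suppF μ := hclosed.csInf_mem ⟨s, hs⟩ hBdd
  have hIio : μ (Set.Iio α) = 0 := by
    refine measure_mono_null ?_ hnull
    intro z hz hzS
    exact absurd (csInf_le hBdd hzS) (not_le.mpr hz)
  have hGone : ∀ z : ℝ, z < α → survG μ z = 1 := by
    intro z hz
    have h1 : μ (Set.Iic z) = 0 :=
      measure_mono_null (fun w hw => lt_of_le_of_lt hw hz) hIio
    have h2 : μ (Set.Ioi z) = 1 := by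
      rw [← Set.compl_Iic]
      exact (prob_compl_eq_one_iff measurableSet_Iic).mpr h1
    simp [survG, h2]
  have hatomnull : ∀ z : ℝ, z < α → μ {z} = 0 := by
    intro z hz
    refine measure_mono_null ?_ hIio
    intro w hw
    simp only [mem_singleton_iff] at hw
    simpa [hw] using hz
  -- key identity for support points x with x + δ < α
  have hkey : ∀ x ∈ suppF μ, x + δ < α → c * ∫ t in Set.Ioi x, survG μ t = 1 := by
    intro x hxS hlt
    have hxT : x ∈ Tset μ δ := by
      refine ⟨hxS, ?_⟩
      rintro ⟨-, -, hpos⟩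
      rw [hatomnull _ hlt] at hpos
      exact absurd hpos (lt_irrefl 0)
    have h := hsol x hxT
    unfold funH at h
    rw [hGone _ hlt] at h
    linarith
  -- part (a)
  have parta : Set.Ioo α (α + |δ|) ∩ suppF μ = ∅ := by
    rw [eq_empty_iff_forall_notMem]
    rintro y ⟨⟨hy1, hy2⟩, hyS⟩
    rw [abs_of_neg hδ] at hy2
    have hyδ : y + δ < α := by linarith
    have hαδ : α + δ < α := by linarith
    have h1 := hkey α hαS hαδ
    have h2 := hkey y hyS hyδ
    have hintα := survG_integrableOn μ hint α
    have hinty := survG_integrableOn μ hint y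
    have hintmid : IntegrableOn (survG μ) (Set.Ioc α y) volume :=
      hintα.mono_set Set.Ioc_subset_Ioi_self
    have hsplit : ∫ t in Set.Ioi α, survG μ t
        = (∫ t in Set.Ioc α y, survG μ t) + ∫ t in Set.Ioi y, survG μ t := by
      rw [← setIntegral_union Ioc_disjoint_Ioi_same measurableSet_Ioi hintmid hinty,
        Set.Ioc_union_Ioi_eq_Ioi hy1.le]
    set m := (α + y) / 2 with hmdef
    have hm1 : α < m := by rw [hmdef]; linarith
    have hm2 : m < y := by rw [hmdef]; linarith
    have hgm : 0 < survG μ m := survG_pos μ hyS hm2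
    have hmid : 0 < ∫ t in Set.Ioc α y, survG μ t := by
      have hsub : Set.Ioc α m ⊆ Set.Ioc α y :=
        Set.Ioc_subset_Ioc_right hm2.le
      have ha : ∫ t in Set.Ioc α m, survG μ t ≤ ∫ t in Set.Ioc α y, survG μ t :=
        setIntegral_mono_set hintmid
          (Filter.Eventually.of_forall fun t => survG_nonneg μ t)
          (HasSubset.Subset.eventuallyLE hsub)
      have hb : survG μ m * (volume (Set.Ioc α m)).toReal
          ≤ ∫ t in Set.Ioc α m, survG μ t := by
        refine setIntegral_ge_of_const_le_real measurableSet_Ioc ?_ ?_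
          (hintmid.mono_set hsub)
        · rw [Real.volume_Ioc]; exact ENNReal.ofReal_ne_top
        · intro t ht
          exact survG_antitone μ ht.2
      have hvol : (volume (Set.Ioc α m)).toReal = m - α := by
        rw [Real.volume_Ioc]
        exact ENNReal.toReal_ofReal (by linarith)
      rw [hvol] at hb
      have : 0 < survG μ m * (m - α) := mul_pos hgm (by linarith)
      linarith
    rw [hsplit, mul_add, h2] at h1
    nlinarith
  -- part (b)
  have partb : 0 < μ {α} := by
    by_contra h
    have h0 : μ {α} = 0 := le_antisymm (not_lt.mp h) zero_le
    have hδabs : 0 < |δ| := abs_pos.mpr hδ.ne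
    have h1 := hαS |δ| hδabs
    have hsub : Set.Ioo (α - |δ|) (α + |δ|)
        ⊆ Set.Iio α ∪ {α} ∪ Set.Ioo α (α + |δ|) := by
      intro z hz
      simp only [mem_Ioo] at hz
      rcases lt_trichotomy z α with hlt | heq | hgt
      · exact Or.inl (Or.inl hlt)
      · exact Or.inl (Or.inr heq)
      · exact Or.inr ⟨hgt, hz.2⟩
    have hposIoo : 0 < μ (Set.Ioo α (α + |δ|)) := by
      by_contra h2
      have h2' : μ (Set.Ioo α (α + |δ|)) = 0 := le_antisymm (not_lt.mp h2) zero_le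
      have : μ (Set.Ioo (α - |δ|) (α + |δ|)) = 0 :=
        measure_mono_null hsub
          (measure_union_null (measure_union_null hIio h0) h2')
      rw [this] at h1
      exact absurd h1 (lt_irrefl 0)
    obtain ⟨y, hy, hyS⟩ := hmeet _ hposIoo
    exact eq_empty_iff_forall_notMem.mp parta y ⟨hy, hyS⟩
  -- part (c)
  refine ⟨parta, partb, ?_⟩
  by_contra h
  rw [not_nonempty_iff_eq_empty] at h
  have hsub : suppF μ ⊆ {α} := by
    intro z hz
    rcases lt_trichotomy z α with hlt | heq | hgt
    · exact absurd (csInf_le hBdd hz) (not_le.mpr hlt)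
    · simp [heq]
    · exact (eq_empty_iff_forall_notMem.mp h z ⟨hgt, hz⟩).elim
  have hcompl : μ ({α} : Set ℝ)ᶜ = 0 :=
    measure_mono_null (compl_subset_compl.mpr hsub) hnull
  exact hnd α ((prob_compl_eq_zero_iff (measurableSet_singleton α)).mp hcompl)
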